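/- Let z > 0 and B ≥ 1 be real numbers. For every real ν with 0 ≤ ν ≤ (1/2)·(B − 1)·z − 1/2, the ratio of consecutive modified Bessel functions of the second kind satisfies 1 < K_{ν+1}(z)/K_ν(z) ≤ B. (Hence the exponential of the difference of logarithms, exp(log K_{ν+1}(z) − log K_ν(z)), neither overflows above B nor underflows below 1.) -/

import Mathlib

open Real MeasureTheory

/-- Modified Bessel function of the second kind, via its integral representation. -/
noncomputable def besselK (ν z : ℝ) : ℝ :=
  ∫ t in Set.Ioi (0 : ℝ), Real.exp (-z * Real.cosh t) * Real.cosh (ν * t)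

/-!
Since `cosh ((ν + 1) t) - cosh (ν t) = sinh t * h t` with
`h t = sinh ((ν + 1/2) t) / cosh (t / 2)`, and `-z sinh t exp (-z cosh t)` is the derivative of
`exp (-z cosh t)`, an integration by parts gives
`z (K_{ν+1}(z) - K_ν(z)) = ∫₀^∞ exp (-z cosh t) h' t dt`. For `ν ≥ 0` the derivative satisfies
`0 ≤ h' t ≤ (2ν + 1) cosh (ν t)`, so `K_{ν+1}(z) ≤ (1 + (2ν + 1) / z) K_ν(z) ≤ B K_ν(z)`.
The lower bound is the strict monotonicity of `K_μ(z)` in `|μ|`.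
-/

open Filter Set Topology

theorem setIntegral_pos_of_forall_pos {X : Type*} [MeasurableSpace X] {μ : Measure X}
    {s : Set X} {f : X → ℝ} (hs : MeasurableSet s) (hμs : μ s ≠ 0) (hf : ∀ x ∈ s, 0 < f x)
    (hfi : IntegrableOn f s μ) : 0 < ∫ x in s, f x ∂μ := by
  rw [setIntegral_pos_iff_support_of_nonneg_ae
    (ae_restrict_of_forall_mem hs fun x hx => (hf x hx).le) hfi,
    inter_eq_right.2 fun x hx => Function.mem_support.2 (hf x hx).ne']
  exact pos_iff_ne_zero.2 hμs

namespace Real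

theorem cosh_le_exp_abs (x : ℝ) : cosh x ≤ exp |x| := by
  rw [← cosh_abs, cosh_eq]
  linarith [exp_le_exp.2 (neg_le_self (abs_nonneg x))]

theorem cosh_add_le_two_mul_cosh_mul_cosh (x y : ℝ) : cosh (x + y) ≤ 2 * cosh x * cosh y := by
  linarith [cosh_add x y, cosh_sub x y, cosh_pos (x - y)]

theorem cosh_add_one_mul_sub_cosh_mul (ν t : ℝ) :
    cosh ((ν + 1) * t) - cosh (ν * t) = sinh t * (sinh ((ν + 1 / 2) * t) / cosh (t / 2)) := by
  have hsinh : sinh t = 2 * sinh (t / 2) * cosh (t / 2) := by rw [← sinh_two_mul]; ring_nf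
  rw [hsinh, show (ν + 1) * t = (ν + 1 / 2) * t + t / 2 by ring,
    show ν * t = (ν + 1 / 2) * t - t / 2 by ring, cosh_add, cosh_sub]
  field_simp [(cosh_pos (t / 2)).ne']
  ring

end Real

section IntegrandDecay

variable {z : ℝ}

theorem exp_neg_mul_cosh_mul_cosh_le_exp_neg (ν : ℝ) (hz : 0 < z) :
    ∀ᶠ t in atTop, exp (-z * cosh t) * cosh (ν * t) ≤ exp (-t) := by
  filter_upwards [eventually_ge_atTop (4 * (|ν| + 1) / z), eventually_ge_atTop 0] with t ht ht0
  rw [div_le_iff₀ hz] at ht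
  have hexp : t ^ 2 / 2 ≤ exp t := by linarith [quadratic_le_exp_of_nonneg ht0]
  have hcosh : exp t ≤ 2 * cosh t := by rw [cosh_eq]; linarith [exp_pos (-t)]
  -- `z cosh t ≥ z t² / 4`, whence the threshold `4 (|ν| + 1) / z`
  have hgrowth : (|ν| + 1) * t ≤ z * cosh t := by
    nlinarith [mul_le_mul_of_nonneg_left hexp hz.le, mul_le_mul_of_nonneg_left hcosh hz.le,
      mul_le_mul_of_nonneg_left ht ht0]
  calc exp (-z * cosh t) * cosh (ν * t) ≤ exp (-z * cosh t) * exp (|ν| * t) := by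
        gcongr
        simpa [abs_mul, abs_of_nonneg ht0] using cosh_le_exp_abs (ν * t)
    _ = exp (|ν| * t - z * cosh t) := by rw [← exp_add]; ring_nf
    _ ≤ exp (-t) := exp_le_exp.2 (by linarith)

theorem integrableOn_exp_neg_mul_cosh_mul_cosh (ν : ℝ) (hz : 0 < z) :
    IntegrableOn (fun t => exp (-z * cosh t) * cosh (ν * t)) (Ioi 0) := by
  refine integrable_of_isBigO_exp_neg one_pos (by fun_prop) (Asymptotics.IsBigO.of_bound 1 ?_)
  filter_upwards [exp_neg_mul_cosh_mul_cosh_le_exp_neg ν hz] with t ht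
  simpa [abs_of_pos (exp_pos _), abs_of_pos (cosh_pos _)] using ht

theorem tendsto_exp_neg_mul_cosh_mul_cosh (ν : ℝ) (hz : 0 < z) :
    Tendsto (fun t => exp (-z * cosh t) * cosh (ν * t)) atTop (𝓝 0) :=
  squeeze_zero' (.of_forall fun t => by positivity) (exp_neg_mul_cosh_mul_cosh_le_exp_neg ν hz)
    tendsto_exp_neg_atTop_nhds_zero

end IntegrandDecay

theorem besselK_pos (ν : ℝ) {z : ℝ} (hz : 0 < z) : 0 < besselK ν z :=
  setIntegral_pos_of_forall_pos measurableSet_Ioi (by simp) (fun t _ => by positivity)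
    (integrableOn_exp_neg_mul_cosh_mul_cosh ν hz)

theorem besselK_lt_besselK {μ ν z : ℝ} (hz : 0 < z) (hμν : |μ| < |ν|) :
    besselK μ z < besselK ν z := by
  have hintν := integrableOn_exp_neg_mul_cosh_mul_cosh ν hz
  have hintμ := integrableOn_exp_neg_mul_cosh_mul_cosh μ hz
  have hpos := setIntegral_pos_of_forall_pos measurableSet_Ioi (by simp) (fun t (ht : 0 < t) =>
    sub_pos.2 <| mul_lt_mul_of_pos_left (cosh_lt_cosh.2 <| by
      simpa [abs_mul, abs_of_pos ht] using mul_lt_mul_of_pos_right hμν ht) (exp_pos _))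
    (hintν.sub hintμ)
  rw [integral_sub hintν hintμ] at hpos
  exact sub_pos.1 hpos

theorem mul_integral_exp_neg_mul_cosh_sinh_mul_eq {z : ℝ} {f f' : ℝ → ℝ}
    (hf : ∀ t ∈ Ici 0, HasDerivAt f (f' t) t) (hf0 : f 0 = 0)
    (hint : IntegrableOn (fun t => exp (-z * cosh t) * (sinh t * f t)) (Ioi 0))
    (hint' : IntegrableOn (fun t => exp (-z * cosh t) * f' t) (Ioi 0))
    (hlim : Tendsto (fun t => exp (-z * cosh t) * f t) atTop (𝓝 0)) :
    z * ∫ t in Ioi 0, exp (-z * cosh t) * (sinh t * f t) =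
      ∫ t in Ioi 0, exp (-z * cosh t) * f' t := by
  have hderiv : ∀ t ∈ Ici (0 : ℝ), HasDerivAt (fun t => exp (-z * cosh t) * f t)
      (exp (-z * cosh t) * f' t - z * (exp (-z * cosh t) * (sinh t * f t))) t := fun t ht => by
    refine (((hasDerivAt_cosh t).const_mul (-z)).exp.mul (hf t ht)).congr_deriv ?_
    ring
  have hparts := integral_Ioi_of_hasDerivAt_of_tendsto' hderiv (hint'.sub (hint.const_mul z)) hlim
  rw [integral_sub hint' (hint.const_mul z), integral_const_mul] at hparts
  simp only [hf0, mul_zero, sub_zero] at hparts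
  linarith

noncomputable def sinhDivCoshHalf (ν t : ℝ) : ℝ :=
  sinh ((ν + 1 / 2) * t) / cosh (t / 2)

noncomputable def sinhDivCoshHalfDeriv (ν t : ℝ) : ℝ :=
  (ν * cosh ((ν + 1 / 2) * t) * cosh (t / 2) + cosh (ν * t) / 2) / cosh (t / 2) ^ 2

theorem hasDerivAt_sinhDivCoshHalf (ν t : ℝ) :
    HasDerivAt (sinhDivCoshHalf ν) (sinhDivCoshHalfDeriv ν t) t := by
  have hnum : HasDerivAt (fun t => sinh ((ν + 1 / 2) * t))
      (cosh ((ν + 1 / 2) * t) * (ν + 1 / 2)) t := by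
    simpa using ((hasDerivAt_id t).const_mul (ν + 1 / 2)).sinh
  have hden : HasDerivAt (fun t => cosh (t / 2)) (sinh (t / 2) * (1 / 2)) t := by
    simpa using ((hasDerivAt_id t).div_const 2).cosh
  refine (hnum.div hden (cosh_pos _).ne').congr_deriv ?_
  -- the numerator of the quotient rule contains `cosh ((ν + 1/2) t - t/2) = cosh (ν t)`
  rw [sinhDivCoshHalfDeriv, show ν * t = (ν + 1 / 2) * t - t / 2 by ring, cosh_sub]
  ring

theorem sinhDivCoshHalfDeriv_nonneg {ν : ℝ} (hν : 0 ≤ ν) (t : ℝ) :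
    0 ≤ sinhDivCoshHalfDeriv ν t := by
  unfold sinhDivCoshHalfDeriv
  positivity

theorem sinhDivCoshHalfDeriv_le {ν : ℝ} (hν : 0 ≤ ν) (t : ℝ) :
    sinhDivCoshHalfDeriv ν t ≤ (2 * ν + 1) * cosh (ν * t) := by
  have hc := cosh_pos (t / 2)
  have hsplit := cosh_add_le_two_mul_cosh_mul_cosh (ν * t) (t / 2)
  rw [show ν * t + t / 2 = (ν + 1 / 2) * t by ring] at hsplit
  have hsq : 1 ≤ cosh (t / 2) ^ 2 := one_le_pow₀ (one_le_cosh _)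
  rw [sinhDivCoshHalfDeriv, div_le_iff₀ (by positivity)]
  have h1 := mul_le_mul_of_nonneg_left hsplit (mul_nonneg hν hc.le)
  have h2 := mul_le_mul_of_nonneg_left hsq (cosh_pos (ν * t)).le
  have h3 : 0 ≤ cosh (ν * t) * cosh (t / 2) ^ 2 := by positivity
  linear_combination h1 + h2 / 2 + h3 / 2

section Gap

variable {ν z : ℝ}

theorem integrableOn_exp_neg_mul_cosh_mul_sinhDivCoshHalfDeriv (hz : 0 < z) (hν : 0 ≤ ν) :
    IntegrableOn (fun t => exp (-z * cosh t) * sinhDivCoshHalfDeriv ν t) (Ioi 0) := by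
  refine ((integrableOn_exp_neg_mul_cosh_mul_cosh ν hz).const_mul (2 * ν + 1)).mono'
    (by unfold sinhDivCoshHalfDeriv; fun_prop) (.of_forall fun t => ?_)
  rw [norm_of_nonneg (mul_nonneg (exp_pos _).le (sinhDivCoshHalfDeriv_nonneg hν t)), mul_left_comm]
  exact mul_le_mul_of_nonneg_left (sinhDivCoshHalfDeriv_le hν t) (exp_pos _).le

theorem tendsto_exp_neg_mul_cosh_mul_sinhDivCoshHalf (hz : 0 < z) (hν : 0 ≤ ν) :
    Tendsto (fun t => exp (-z * cosh t) * sinhDivCoshHalf ν t) atTop (𝓝 0) := by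
  have hsinh : ∀ t, 0 ≤ t → 0 ≤ sinh ((ν + 1 / 2) * t) :=
    fun t ht => sinh_nonneg_iff.2 (by positivity)
  refine squeeze_zero' ?_ ?_ (tendsto_exp_neg_mul_cosh_mul_cosh (ν + 1 / 2) hz)
  · filter_upwards [eventually_ge_atTop 0] with t ht
    exact mul_nonneg (exp_pos _).le (div_nonneg (hsinh t ht) (cosh_pos _).le)
  · filter_upwards [eventually_ge_atTop 0] with t ht
    refine mul_le_mul_of_nonneg_left ?_ (exp_pos _).le
    exact (div_le_self (hsinh t ht) (one_le_cosh _)).trans (sinh_lt_cosh _).le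

theorem mul_besselK_add_one_sub_besselK (hz : 0 < z) (hν : 0 ≤ ν) :
    z * (besselK (ν + 1) z - besselK ν z) =
      ∫ t in Ioi 0, exp (-z * cosh t) * sinhDivCoshHalfDeriv ν t := by
  have hgap : (fun t => exp (-z * cosh t) * cosh ((ν + 1) * t) - exp (-z * cosh t) * cosh (ν * t))
      = fun t => exp (-z * cosh t) * (sinh t * sinhDivCoshHalf ν t) := by
    ext t
    rw [← mul_sub, cosh_add_one_mul_sub_cosh_mul, sinhDivCoshHalf]
  have hint₁ := integrableOn_exp_neg_mul_cosh_mul_cosh (ν + 1) hz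
  have hint₀ := integrableOn_exp_neg_mul_cosh_mul_cosh ν hz
  have hint : IntegrableOn (fun t => exp (-z * cosh t) * (sinh t * sinhDivCoshHalf ν t))
      (Ioi 0) := by
    rw [← hgap]
    exact hint₁.sub hint₀
  rw [besselK, besselK, ← integral_sub hint₁ hint₀, hgap]
  exact mul_integral_exp_neg_mul_cosh_sinh_mul_eq (fun t _ => hasDerivAt_sinhDivCoshHalf ν t)
    (by simp [sinhDivCoshHalf]) hint (integrableOn_exp_neg_mul_cosh_mul_sinhDivCoshHalfDeriv hz hν)
    (tendsto_exp_neg_mul_cosh_mul_sinhDivCoshHalf hz hν)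

theorem mul_besselK_add_one_sub_besselK_le (hz : 0 < z) (hν : 0 ≤ ν) :
    z * (besselK (ν + 1) z - besselK ν z) ≤ (2 * ν + 1) * besselK ν z := by
  rw [mul_besselK_add_one_sub_besselK hz hν, besselK, ← integral_const_mul]
  refine setIntegral_mono (integrableOn_exp_neg_mul_cosh_mul_sinhDivCoshHalfDeriv hz hν)
    ((integrableOn_exp_neg_mul_cosh_mul_cosh ν hz).const_mul _) fun t => ?_
  rw [mul_left_comm]
  exact mul_le_mul_of_nonneg_left (sinhDivCoshHalfDeriv_le hν t) (exp_pos _).le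

end Gap

theorem besselK_ratio_bounds_general (z B : ℝ) (hz : 0 < z)
    (ν : ℝ) (hν : 0 ≤ ν) (hν' : ν ≤ (1 / 2) * (B - 1) * z - 1 / 2) :
    1 < besselK (ν + 1) z / besselK ν z ∧ besselK (ν + 1) z / besselK ν z ≤ B := by
  have hK := besselK_pos ν hz
  refine ⟨(one_lt_div hK).2 (besselK_lt_besselK hz ?_), (div_le_iff₀ hK).2 ?_⟩
  · rw [abs_of_nonneg hν, abs_of_nonneg (by linarith)]
    linarith
  · have hgap := mul_besselK_add_one_sub_besselK_le hz hν
    have hcoeff : 2 * ν + 1 ≤ (B - 1) * z := by linarith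
    refine le_of_mul_le_mul_left ?_ hz
    nlinarith [mul_le_mul_of_nonneg_right hcoeff hK.le]

theorem besselK_ratio_bounds (z B : ℝ) (hz : 0 < z) (hB : 1 ≤ B)
    (ν : ℝ) (hν : 0 ≤ ν) (hν' : ν ≤ (1 / 2) * (B - 1) * z - 1 / 2) :
    1 < besselK (ν + 1) z / besselK ν z ∧ besselK (ν + 1) z / besselK ν z ≤ B :=
  besselK_ratio_bounds_general z B hz ν hν hν'
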